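/- Let E ⊆ (IO)* be a finite consistent set of examples and S ⊆ (IO)^ω a specification. If there exists a preMealy machine P such that E ⊆ L(P) and S is P-realizable, then S is PTA(E)-realizable. -/

import Mathlib

open scoped Classical

/-- A preMealy machine over input alphabet `I`, output alphabet `O`, with state type `M`. -/
structure PreMealy (I O M : Type) where
  init : M
  trans : M → I → Option (O × M)

namespace PreMealy

variable {I O M : Type}

/-- One step of a preMealy machine on a pair (input, output): defined iff the transition
on the input is defined and produces exactly the given output. -/
noncomputable def step (P : PreMealy I O M) (m : M) (p : I × O) : Option M :=
  match P.trans m p.1 with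
  | some (o, m') => if o = p.2 then some m' else none
  | none => none

/-- Running a preMealy machine on a finite word of (input, output) pairs. -/
noncomputable def runFrom (P : PreMealy I O M) : M → List (I × O) → Option M
  | m, [] => some m
  | m, p :: u =>
    match P.step m p with
    | some m' => runFrom P m' u
    | none => none

/-- The language `L(P)` of finite words in `(I·O)*` accepted by `P`. -/
def lang (P : PreMealy I O M) : Set (List (I × O)) :=
  { u | (P.runFrom P.init u).isSome }

/-- The ω-language `L_ω(P)`: ω-words all of whose finite prefixes belong to `L(P)`. -/
def omegaLang (P : PreMealy I O M) : Set (ℕ → I × O) :=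
  { w | ∀ n : ℕ, ((List.range n).map w) ∈ P.lang }

/-- `P` is a (complete) Mealy machine when its transition function is total. -/
def Total (P : PreMealy I O M) : Prop :=
  ∀ m i, (P.trans m i).isSome

/-- A hole of `P` is a pair (state, input) on which the transition is undefined. -/
def Hole (P : PreMealy I O M) (m : M) (i : I) : Prop :=
  P.trans m i = none

/-- `Left_p`: the set of finite words reaching state `p` from the initial state. -/
def leftLang (P : PreMealy I O M) (p : M) : Set (List (I × O)) :=
  { u | P.runFrom P.init u = some p }

end PreMealy

/-- `P₁ ⪯ P₂`: `P₁` is a subgraph of `P₂`. -/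
def Subgraph {I O M₁ M₂ : Type} (P₁ : PreMealy I O M₁) (P₂ : PreMealy I O M₂) : Prop :=
  ∃ Φ : M₁ → M₂, Function.Injective Φ ∧ Φ P₁.init = P₂.init ∧
    ∀ p i o q, P₁.trans p i = some (o, q) ↔ P₂.trans (Φ p) i = some (o, Φ q)

/-- `S` is `P`-realizable: some (finite-state, complete) Mealy machine extends `P`
and its ω-language is included in `S ⊆ (I·O)^ω`. -/
def PRealizable {I O M : Type} (P : PreMealy I O M) (S : Set (ℕ → I × O)) : Prop :=
  ∃ (N : Type) (_ : Fintype N) (Mach : PreMealy I O N),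
    Mach.Total ∧ Subgraph P Mach ∧ Mach.omegaLang ⊆ S

/-- Quotient (left derivative) of a set of ω-words by a finite word. -/
def wordQuot {α : Type} (u : List α) (S : Set (ℕ → α)) : Set (ℕ → α) :=
  { v | (fun n => if h : n < u.length then u.get ⟨n, h⟩ else v (n - u.length)) ∈ S }

/-- Interleaving of an ω-word over `I × O` into an ω-word over `Σ = I ⊕ O`. -/
def interleave {I O : Type} (w : ℕ → I × O) : ℕ → I ⊕ O :=
  fun n => if n % 2 = 0 then Sum.inl (w (n / 2)).1 else Sum.inr (w (n / 2)).2

/-- Flattening of a finite word over `I × O` into a word over `Σ = I ⊕ O`. -/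
def flattenWord {I O : Type} (u : List (I × O)) : List (I ⊕ O) :=
  u.flatMap fun p => [Sum.inl p.1, Sum.inr p.2]

/-- `P`-realizability of a specification over `Σ = I ⊕ O`. -/
def PRealizableSigma {I O M : Type} (P : PreMealy I O M) (S : Set (ℕ → I ⊕ O)) : Prop :=
  ∃ (N : Type) (_ : Fintype N) (Mach : PreMealy I O N),
    Mach.Total ∧ Subgraph P Mach ∧ ∀ w ∈ Mach.omegaLang, interleave w ∈ S

/-- Realizability of a specification over `Σ = I ⊕ O` by some Mealy machine. -/
def RealizableSigma (I O : Type) (S : Set (ℕ → I ⊕ O)) : Prop :=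
  ∃ (N : Type) (_ : Fintype N) (Mach : PreMealy I O N),
    Mach.Total ∧ ∀ w ∈ Mach.omegaLang, interleave w ∈ S

/-- A universal coBüchi automaton; `col1 q` means state `q` has color 1. -/
structure UCB (σ Q : Type) where
  init : Set Q
  δ : Q → σ → Set Q
  δ_ne : ∀ q a, (δ q a).Nonempty
  col1 : Q → Prop

namespace UCB

variable {σ Q : Type}

/-- `ρ` is a run of `A` on the ω-word `w`. -/
def Run (A : UCB σ Q) (w : ℕ → σ) (ρ : ℕ → Q) : Prop :=
  ρ 0 ∈ A.init ∧ ∀ n, ρ (n + 1) ∈ A.δ (ρ n) (w n)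

/-- `L^∀_k(A)`: every run visits 1-colored states at most `k` times. -/
def langK (A : UCB σ Q) (k : ℕ) : Set (ℕ → σ) :=
  { w | ∀ ρ : ℕ → Q, A.Run w ρ →
      ∀ s : Finset ℕ, (∀ j ∈ s, A.col1 (ρ j)) → s.card ≤ k }

/-- `L^∀(A)`: every run visits 1-colored states only finitely often. -/
def langForall (A : UCB σ Q) : Set (ℕ → σ) :=
  { w | ∀ ρ : ℕ → Q, A.Run w ρ → { j | A.col1 (ρ j) }.Finite }

/-- A run prefix of `A` on a finite word `p` (only `ρ 0, …, ρ p.length` are relevant). -/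
def RunPrefix (A : UCB σ Q) (p : List σ) (ρ : ℕ → Q) : Prop :=
  ρ 0 ∈ A.init ∧ ∀ (j : ℕ) (h : j < p.length), ρ (j + 1) ∈ A.δ (ρ j) (p.get ⟨j, h⟩)

/-- The set of states reachable from a set of states while reading a finite word. -/
def postSet (A : UCB σ Q) : Set Q → List σ → Set Q
  | S, [] => S
  | S, a :: u => postSet A (⋃ q ∈ S, A.δ q a) u

end UCB

/-- The set `CF(A,k)` of `k`-counting functions, as integer-valued functions. -/
def CFset (Q : Type) (k : ℕ) : Set (Q → ℤ) :=
  { f | ∀ q, -1 ≤ f q ∧ f q ≤ (k : ℤ) + 1 }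

/-- The transition function `δ^D` of the determinization `D(A,k)` on counting functions. -/
noncomputable def detTransFun {σ Q : Type} [Fintype Q] (A : UCB σ Q) (k : ℕ)
    (f : Q → ℤ) (a : σ) : Q → ℤ := fun q =>
  let pred : Finset Q := Finset.univ.filter fun q' => q ∈ A.δ q' a ∧ 0 ≤ f q'
  if h : pred.Nonempty then
    min (pred.sup' h f + (if A.col1 q then 1 else 0)) ((k : ℤ) + 1)
  else -1

/-- The (unique) run of `D(A,k)` on an ω-word `w`, starting from `f`. -/
noncomputable def detRun {σ Q : Type} [Fintype Q] (A : UCB σ Q) (k : ℕ)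
    (f : Q → ℤ) (w : ℕ → σ) : ℕ → Q → ℤ
  | 0 => f
  | n + 1 => detTransFun A k (detRun A k f w n) (w n)

/-- The state of `D(A,k)` reached from `f` after reading a finite word. -/
noncomputable def detPostW {σ Q : Type} [Fintype Q] (A : UCB σ Q) (k : ℕ) :
    (Q → ℤ) → List σ → Q → ℤ
  | f, [] => f
  | f, a :: u => detPostW A k (detTransFun A k f a) u

/-- The initial counting function `f₀` of `D(A,k)`. -/
noncomputable def initCF {σ Q : Type} (A : UCB σ Q) : Q → ℤ := fun q =>
  if q ∈ A.init then (if A.col1 q then 1 else 0) else -1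

/-- `L(D(A,k)[f])`: ω-words whose run of `D(A,k)` from `f` never visits an unsafe
counting function (one taking the value `k+1`). -/
def langD {σ Q : Type} [Fintype Q] (A : UCB σ Q) (k : ℕ) (f : Q → ℤ) :
    Set (ℕ → σ) :=
  { w | ∀ n, ¬ ∃ q, detRun A k f w n q = (k : ℤ) + 1 }

/-- A complete deterministic safety automaton: the set `bad` of unsafe states is a trap. -/
structure DetSafety (σ Q : Type) where
  start : Q
  δ : Q → σ → Q
  bad : Set Q
  trap : ∀ q ∈ bad, ∀ a, δ q a ∈ bad

namespace DetSafety

variable {σ Q : Type}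

/-- State reached after reading a finite word. -/
def postW (A : DetSafety σ Q) : Q → List σ → Q
  | q, [] => q
  | q, a :: u => postW A (A.δ q a) u

/-- The run of a deterministic automaton on an ω-word. -/
def runOn (A : DetSafety σ Q) (w : ℕ → σ) : ℕ → Q
  | 0 => A.start
  | n + 1 => A.δ (runOn A w n) (w n)

/-- The (safety) ω-language: the run never enters an unsafe state. -/
def omegaLang (A : DetSafety σ Q) : Set (ℕ → σ) :=
  { w | ∀ n, runOn A w n ∉ A.bad }

end DetSafety

/-- A complete deterministic automaton (no acceptance condition). -/
structure DetAuto (σ Q : Type) where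
  start : Q
  δ : Q → σ → Q

/-- State reached after reading a finite word. -/
def DetAuto.postW {σ Q : Type} (A : DetAuto σ Q) : Q → List σ → Q
  | q, [] => q
  | q, a :: u => DetAuto.postW A (A.δ q a) u

/-- Domination order between collections: every element of `A` is below some element of `B`. -/
def acLE {α : Type} (r : α → α → Prop) (A B : Set α) : Prop :=
  ∀ x ∈ A, ∃ y ∈ B, r x y

/-- Downward closure of a collection of subsets of `Y`. -/
def dcl {Y : Type} (A : Set (Set Y)) : Set (Set Y) :=
  { X | ∃ X' ∈ A, X ⊆ X' }

/-- The merged relation `U(∼, p)` for a non-congruent point with successors `s, s'`. -/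
def Umerge {M : Type} (r : M → M → Prop) (s s' : M) : M → M → Prop :=
  fun y y' => r y y' ∨ (r y s ∧ r y' s') ∨ (r y' s ∧ r y s')

/-- Prefix closure of a set of finite words over `I × O`. -/
def prefsE {I O : Type} (E : Set (List (I × O))) : Set (List (I × O)) :=
  { u | ∃ e ∈ E, u <+: e }

/-- Consistency of a set of examples: the output is uniquely determined by each
prefix ending with an input. -/
def ConsistentE {I O : Type} (E : Set (List (I × O))) : Prop :=
  ∀ (u : List (I × O)) (i : I) (o o' : O),
    (u ++ [(i, o)]) ∈ prefsE E → (u ++ [(i, o')]) ∈ prefsE E → o = o'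

/-- The prefix-tree acceptor `PTA(E)`: states are the prefixes of `E` (together with ε). -/
noncomputable def PTA {I O : Type} (E : Set (List (I × O))) :
    PreMealy I O (↥(insert ([] : List (I × O)) (prefsE E))) where
  init := ⟨[], Set.mem_insert _ _⟩
  trans := fun u i =>
    if h : ∃ o : O, (u.1 ++ [(i, o)]) ∈ prefsE E then
      some (h.choose, ⟨u.1 ++ [(i, h.choose)], Set.mem_insert_of_mem _ h.choose_spec⟩)
    else none

/-- The fixpoint labelling `F*` of the states of a preMealy machine by counting functions. -/
noncomputable def Fstar {I O M Q : Type} [Fintype Q] (P : PreMealy I O M)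
    (A : UCB (I ⊕ O) Q) (k : ℕ) (m : M) : Q → ℤ := fun q =>
  sSup (insert (-1 : ℤ)
    { z | ∃ u ∈ P.leftLang m, detPostW A k (initCF A) (flattenWord u) q = z })

/-!
The examples `E` lie in `L(P)`, and `P` embeds into a Mealy machine `M` realizing `S`, so every
prefix of an example is a word of `L(M)`. Sending each state `u` of `PTA(E)` to the state that `M`
reaches on `u` is therefore a homomorphism of preMealy machines `PTA(E) → M`. Fill every hole of
`PTA(E)` by jumping along that homomorphism into a disjoint copy of `M`: the result is a complete
finite machine containing `PTA(E)` as a subgraph, and it maps homomorphically into `M`, so its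
ω-language is contained in `L_ω(M) ⊆ S`.
-/

namespace PreMealy

variable {I O M M' : Type}

theorem step_eq_some_iff {P : PreMealy I O M} {m m' : M} {p : I × O} :
    P.step m p = some m' ↔ P.trans m p.1 = some (p.2, m') := by
  unfold step
  rcases P.trans m p.1 with _ | ⟨o, q⟩
  · simp
  · by_cases ho : o = p.2 <;> simp [ho]

theorem runFrom_append (P : PreMealy I O M) (m : M) (u v : List (I × O)) :
    P.runFrom m (u ++ v) = (P.runFrom m u).bind (P.runFrom · v) := by
  induction u generalizing m with
  | nil => rfl
  | cons p u ih =>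
    simp only [List.cons_append, runFrom]
    cases P.step m p <;> simp [ih]

theorem runFrom_singleton (P : PreMealy I O M) (m : M) (p : I × O) :
    P.runFrom m [p] = P.step m p := by
  simp only [runFrom]
  cases P.step m p <;> rfl

theorem mem_lang_of_prefix {P : PreMealy I O M} {u v : List (I × O)} (huv : u <+: v)
    (hv : v ∈ P.lang) : u ∈ P.lang := by
  obtain ⟨w, rfl⟩ := huv
  simp only [lang, Set.mem_ofPred_eq, runFrom_append] at hv ⊢
  exact Option.isSome_of_isSome_bind hv

structure IsHom (P : PreMealy I O M) (P' : PreMealy I O M') (Φ : M → M') : Prop where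
  map_init : Φ P.init = P'.init
  map_trans : ∀ m i o m₁, P.trans m i = some (o, m₁) → P'.trans (Φ m) i = some (o, Φ m₁)

namespace IsHom

variable {P : PreMealy I O M} {P' : PreMealy I O M'} {Φ : M → M'}

theorem runFrom_eq_some (hΦ : IsHom P P' Φ) {u : List (I × O)} {m m₁ : M}
    (h : P.runFrom m u = some m₁) : P'.runFrom (Φ m) u = some (Φ m₁) := by
  induction u generalizing m with
  | nil =>
    cases Option.some.inj h
    rfl
  | cons p u ih =>
    simp only [runFrom] at h ⊢
    cases hs : P.step m p with
    | none => simp [hs] at h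
    | some m₂ =>
      rw [hs] at h
      rw [step_eq_some_iff.2 (hΦ.map_trans _ _ _ _ (step_eq_some_iff.1 hs))]
      exact ih h

theorem lang_subset (hΦ : IsHom P P' Φ) : P.lang ⊆ P'.lang := by
  intro u hu
  obtain ⟨m, hm⟩ := Option.isSome_iff_exists.1 hu
  have := hΦ.runFrom_eq_some hm
  rw [hΦ.map_init] at this
  simp [lang, this]

theorem omegaLang_subset (hΦ : IsHom P P' Φ) : P.omegaLang ⊆ P'.omegaLang :=
  fun _ hw n => hΦ.lang_subset (hw n)

end IsHom

end PreMealy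

open PreMealy

theorem Subgraph.exists_isHom {I O M M' : Type} {P : PreMealy I O M} {P' : PreMealy I O M'}
    (h : Subgraph P P') : ∃ Φ, IsHom P P' Φ :=
  let ⟨Φ, _, hinit, htrans⟩ := h
  ⟨Φ, hinit, fun m i o m₁ => (htrans m i o m₁).1⟩

namespace PreMealy

variable {I O M N : Type}

def fillHoles (P : PreMealy I O M) (Mach : PreMealy I O N) (f : M → N) :
    PreMealy I O (M ⊕ N) where
  init := .inl P.init
  trans
    | .inl m, i => ((P.trans m i).map (Prod.map id .inl)).or
        ((Mach.trans (f m) i).map (Prod.map id .inr))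
    | .inr n, i => (Mach.trans n i).map (Prod.map id .inr)

variable {P : PreMealy I O M} {Mach : PreMealy I O N} {f : M → N}

theorem fillHoles_total (h : Mach.Total) : (P.fillHoles Mach f).Total := by
  rintro (m | n) i <;> simp [fillHoles, h _ i]

theorem subgraph_fillHoles : Subgraph P (P.fillHoles Mach f) := by
  refine ⟨Sum.inl, Sum.inl_injective, rfl, fun m i o m₁ => ?_⟩
  simp only [fillHoles]
  rcases P.trans m i with _ | ⟨o', m'⟩ <;> simp

theorem IsHom.fillHoles (hf : IsHom P Mach f) :
    IsHom (P.fillHoles Mach f) Mach (Sum.elim f id) := by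
  refine ⟨hf.map_init, ?_⟩
  rintro (m | n) i o s h <;> simp only [PreMealy.fillHoles] at h
  · cases hP : P.trans m i with
    | some om =>
      simp only [hP, Option.map_some, Option.some_or, Option.some.injEq] at h
      cases h
      exact hf.map_trans _ _ _ _ hP
    | none =>
      simp only [hP, Option.map_none, Option.none_or, Option.map_eq_some_iff] at h
      obtain ⟨⟨o, n⟩, hM, ⟨⟩⟩ := h
      exact hM
  · simp only [Option.map_eq_some_iff] at h
    obtain ⟨⟨o, n⟩, hM, ⟨⟩⟩ := h
    exact hM

end PreMealy

theorem PRealizable.of_isHom {I O M N : Type} [Finite M] [Fintype N] {P : PreMealy I O M}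
    {Mach : PreMealy I O N} {S : Set (ℕ → I × O)} (htot : Mach.Total)
    (hS : Mach.omegaLang ⊆ S) {f : M → N} (hf : IsHom P Mach f) : PRealizable P S :=
  have := Fintype.ofFinite M
  ⟨M ⊕ N, inferInstance, P.fillHoles Mach f, fillHoles_total htot, subgraph_fillHoles,
    hf.fillHoles.omegaLang_subset.trans hS⟩

section PTA

variable {I O : Type} {E : Set (List (I × O))}

theorem Set.Finite.prefsE (hE : E.Finite) : (prefsE E).Finite :=
  (hE.biUnion fun e _ => e.inits.finite_toSet).subset
    fun _ ⟨_, he, hue⟩ => Set.mem_biUnion he ((List.mem_inits _ _).2 hue)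

theorem prefsE_subset_lang {M : Type} {P : PreMealy I O M} (h : E ⊆ P.lang) :
    prefsE E ⊆ P.lang :=
  fun _ ⟨_, he, hue⟩ => mem_lang_of_prefix hue (h he)

theorem PTA_trans_eq_some {u u' : ↥(insert ([] : List (I × O)) (prefsE E))} {i : I} {o : O}
    (h : (PTA E).trans u i = some (o, u')) : u'.1 = u.1 ++ [(i, o)] := by
  simp only [PTA] at h
  split_ifs at h
  simp only [Option.some.injEq, Prod.mk.injEq] at h
  obtain ⟨rfl, rfl⟩ := h
  rfl

theorem exists_isHom_PTA {N : Type} {Mach : PreMealy I O N} (h : prefsE E ⊆ Mach.lang) :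
    ∃ Φ, IsHom (PTA E) Mach Φ := by
  have hrun : ∀ u : ↥(insert ([] : List (I × O)) (prefsE E)),
      ∃ n, Mach.runFrom Mach.init u.1 = some n := by
    rintro ⟨u, rfl | hu⟩
    · exact ⟨_, rfl⟩
    · exact Option.isSome_iff_exists.1 (h hu)
  choose Φ hΦ using hrun
  refine ⟨Φ, (Option.some.inj (hΦ (PTA E).init)).symm, fun u i o u' htr => ?_⟩
  have hu' := hΦ u'
  rw [PTA_trans_eq_some htr, runFrom_append, hΦ u, Option.bind_some, runFrom_singleton]
    at hu'
  exact step_eq_some_iff.1 hu'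

end PTA

theorem stmt18_general {I O : Type}
    (E : Set (List (I × O))) (hfin : E.Finite)
    (S : Set (ℕ → I × O))
    (h : ∃ (M : Type) (_ : Fintype M) (P : PreMealy I O M),
      E ⊆ P.lang ∧ PRealizable P S) :
    PRealizable (PTA E) S := by
  obtain ⟨M, _, P, hEP, N, _, Mach, htot, hPMach, hS⟩ := h
  have : Finite ↥(insert ([] : List (I × O)) (prefsE E)) := (hfin.prefsE.insert []).to_subtype
  obtain ⟨f, hf⟩ := hPMach.exists_isHom
  obtain ⟨g, hg⟩ := exists_isHom_PTA ((prefsE_subset_lang hEP).trans hf.lang_subset)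
  exact .of_isHom htot hS hg

/-- if some preMealy machine `P` satisfies `E ⊆ L(P)` and `S` is
`P`-realizable, then `S` is `PTA(E)`-realizable. -/
theorem stmt18 {I O : Type} [Fintype I] [Nonempty I] [Fintype O] [Nonempty O]
    (E : Set (List (I × O))) (hfin : E.Finite) (hcons : ConsistentE E)
    (S : Set (ℕ → I × O))
    (h : ∃ (M : Type) (_ : Fintype M) (P : PreMealy I O M),
      E ⊆ P.lang ∧ PRealizable P S) :
    PRealizable (PTA E) S :=
  stmt18_general E hfin S h
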